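/- arXiv:1601.02763 — 7 statements merged into one kernel-verified Lean document; each statement's English description precedes it below -/
import Mathlib

section
/- Let r_1 < r_2 be positive integers and let C be a linear [n,k,d]_q ((n_1,r_1),(n_2,r_2))-local code with n = n_1 + n_2, n_1 ≥ 1, n_2 ≥ 1, and assume r_1·⌈n_1/(r_1+1)⌉ < k − 1. Then d ≤ n − k + 2 − ⌈n_1/(r_1+1)⌉ − ⌈(k − r_1·⌈n_1/(r_1+1)⌉)/r_2⌉. -/
open Finset

/-- `C` is a linear `[n,k,d]_q` code over `F`: it has `F`-dimension `k` and its minimum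
Hamming distance (least Hamming weight of a nonzero codeword) equals `d`. -/
def IsLinearCode (F : Type*) [Field F] [DecidableEq F] {n : ℕ}
    (C : Submodule F (Fin n → F)) (k d : ℕ) : Prop :=
  Module.finrank F C = k ∧
    (∀ c ∈ C, c ≠ 0 → d ≤ hammingNorm c) ∧
    ∃ c ∈ C, c ≠ 0 ∧ hammingNorm c = d

/-- Coordinate `i` of the code `C` has locality `r`. -/
def HasLocality (F : Type*) [Field F] {n : ℕ} (C : Submodule F (Fin n → F))
    (i : Fin n) (r : ℕ) : Prop :=
  ∃ R : Finset (Fin n), i ∉ R ∧ R.card ≤ r ∧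
    ∃ lam : Fin n → F, ∀ c ∈ C, c i = ∑ j ∈ R, lam j * c j

/-- Coordinate `i` of the code `C` has locality `r` with a repair set contained in `S`. -/
def HasLocalityIn (F : Type*) [Field F] {n : ℕ} (C : Submodule F (Fin n → F))
    (i : Fin n) (r : ℕ) (S : Finset (Fin n)) : Prop :=
  ∃ R : Finset (Fin n), R ⊆ S ∧ i ∉ R ∧ R.card ≤ r ∧
    ∃ lam : Fin n → F, ∀ c ∈ C, c i = ∑ j ∈ R, lam j * c j

/-- `H(I)`: the `F`-dimension of the image of `C` under the coordinate projection onto `I`. -/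
noncomputable def projDim (F : Type*) [Field F] {n : ℕ}
    (C : Submodule F (Fin n → F)) (I : Finset (Fin n)) : ℕ :=
  Module.finrank F (C.map (LinearMap.funLeft F F (fun i : {x // x ∈ I} => (i : Fin n))))

/-- `k_opt^{(q)}(n,d)`: the largest dimension of a linear code of length `n` over `F`
with minimum Hamming distance at least `d`. -/
noncomputable def kopt (F : Type*) [Field F] [DecidableEq F] (n d : ℕ) : ℕ :=
  sSup {k | ∃ C : Submodule F (Fin n → F), Module.finrank F C = k ∧
    ∀ c ∈ C, c ≠ 0 → d ≤ hammingNorm c}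

/-! Let `K(I) = C.vanishingOn I` be the subcode of `C` vanishing on a set `I` of coordinates.
The Singleton bound for `K(I)`, whose support avoids `I`, gives `d + |I| + dim K(I) ≤ n + 1` as long as `K(I) ≠ 0`.
So it suffices to grow `I` so that `|I| + dim K(I)` increases while `K(I)` stays nonzero.
Adjoining to `I` a coordinate `i ∉ I` together with a repair set `R` of `i` increases
`|I| + dim K(I)` by at least one, because vanishing on `I ∪ R` forces vanishing at `i`, and lowers
`dim K(I)` by at most `|R|`. Take `a = ⌈n₁/(r₁+1)⌉` such steps with coordinates of `S₁`, which
do not run out because each step uses at most `r₁ + 1` coordinates, followed by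
`⌈(k - r₁ a)/r₂⌉ - 1` steps with arbitrary coordinates. Throughout, `dim K(I)` stays positive. -/

open Module

lemma Int.ceil_div_sub_one_mul_lt {α : Type*} [Field α] [LinearOrder α] [IsStrictOrderedRing α]
    [FloorRing α] (x : α) {y : α} (hy : 0 < y) : ((⌈x / y⌉ : α) - 1) * y < x :=
  (lt_div_iff₀ hy).mp (by linarith [Int.ceil_lt_add_one (x / y)])

lemma Submodule.finrank_le_finrank_inf_ker_add_one {K V : Type*} [Field K] [AddCommGroup V]
    [Module K V] [FiniteDimensional K V] (p : Submodule K V) (f : V →ₗ[K] K) :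
    finrank K p ≤ finrank K ↥(p ⊓ LinearMap.ker f) + 1 := by
  have hker : finrank K (LinearMap.ker (f.domRestrict p)) = finrank K ↥(p ⊓ LinearMap.ker f) := by
    rw [LinearMap.ker_domRestrict, ← Submodule.map_comap_subtype,
      Submodule.finrank_map_subtype_eq]
  have hrange : finrank K (LinearMap.range (f.domRestrict p)) ≤ 1 :=
    (Submodule.finrank_le _).trans (finrank_self K).le
  have := LinearMap.finrank_range_add_finrank_ker (f.domRestrict p)
  omega

namespace Submodule

variable {F ι : Type*} [Field F] (C : Submodule F (ι → F))

def vanishingOn (I : Finset ι) : Submodule F (ι → F) :=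
  C ⊓ Submodule.pi (I : Set ι) fun _ => ⊥

variable {C} in
@[simp]
lemma mem_vanishingOn {I : Finset ι} {c : ι → F} :
    c ∈ C.vanishingOn I ↔ c ∈ C ∧ ∀ i ∈ I, c i = 0 := by
  simp [vanishingOn]

lemma vanishingOn_empty : C.vanishingOn ∅ = C := by
  ext; simp

lemma vanishingOn_anti : Antitone C.vanishingOn := fun _ _ hIJ _ hc => by
  simp only [mem_vanishingOn] at hc ⊢
  exact ⟨hc.1, fun i hi => hc.2 i (hIJ hi)⟩

section

variable [DecidableEq ι]

lemma vanishingOn_insert (I : Finset ι) (i : ι) :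
    C.vanishingOn (insert i I) = C.vanishingOn I ⊓ LinearMap.ker (LinearMap.proj i) := by
  ext c
  simp only [mem_vanishingOn, mem_inf, Finset.forall_mem_insert, LinearMap.mem_ker,
    LinearMap.coe_proj, Function.eval]
  tauto

lemma vanishingOn_insert_of_repair {I R : Finset ι} {i : ι} {lam : ι → F} (hR : R ⊆ I)
    (hrepair : ∀ c ∈ C, c i = ∑ j ∈ R, lam j * c j) :
    C.vanishingOn (insert i I) = C.vanishingOn I := by
  refine le_antisymm (C.vanishingOn_anti (Finset.subset_insert i I)) fun c hc => ?_
  rw [mem_vanishingOn] at hc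
  rw [mem_vanishingOn, Finset.forall_mem_insert, hrepair c hc.1]
  exact ⟨hc.1, Finset.sum_eq_zero fun j hj => by rw [hc.2 j (hR hj), mul_zero], hc.2⟩

end

variable [Fintype ι]

lemma exists_apply_ne_zero_of_finrank_vanishingOn_pos {I : Finset ι}
    (h : 0 < finrank F (C.vanishingOn I)) :
    ∃ c ∈ C.vanishingOn I, ∃ i ∉ I, c i ≠ 0 := by
  have := finrank_pos_iff.mp h
  obtain ⟨⟨c, hc⟩, hc0⟩ := exists_ne (0 : C.vanishingOn I)
  obtain ⟨i, hi⟩ := Function.ne_iff.mp (Subtype.coe_ne_coe.mpr hc0)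
  exact ⟨c, hc, i, fun hiI => hi ((mem_vanishingOn.mp hc).2 i hiI), hi⟩

variable [DecidableEq ι]

lemma finrank_vanishingOn_le_insert (I : Finset ι) (i : ι) :
    finrank F (C.vanishingOn I) ≤ finrank F (C.vanishingOn (insert i I)) + 1 := by
  rw [vanishingOn_insert]
  exact finrank_le_finrank_inf_ker_add_one _ _

lemma finrank_vanishingOn_insert_lt {I : Finset ι} {c : ι → F} {i : ι}
    (hc : c ∈ C.vanishingOn I) (hci : c i ≠ 0) :
    finrank F (C.vanishingOn (insert i I)) < finrank F (C.vanishingOn I) := by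
  refine Submodule.finrank_lt_finrank_of_lt
    (lt_of_le_of_ne (C.vanishingOn_anti (Finset.subset_insert i I)) fun h => hci ?_)
  rw [← h, mem_vanishingOn] at hc
  exact hc.2 i (Finset.mem_insert_self i I)

lemma finrank_vanishingOn_le_union (I R : Finset ι) :
    finrank F (C.vanishingOn I) ≤ finrank F (C.vanishingOn (I ∪ R)) + R.card := by
  induction R using Finset.induction_on with
  | empty => rw [Finset.union_empty, Finset.card_empty, add_zero]
  | insert a R ha ih =>
    rw [Finset.union_insert, Finset.card_insert_of_notMem ha]
    have := C.finrank_vanishingOn_le_insert (I ∪ R) a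
    omega

lemma card_add_finrank_vanishingOn_le_union (I R : Finset ι) :
    I.card + finrank F (C.vanishingOn I) ≤
      (I ∪ R).card + finrank F (C.vanishingOn (I ∪ R)) := by
  have h := C.finrank_vanishingOn_le_union I (R \ I)
  rw [Finset.union_sdiff_self_eq_union] at h
  have := Finset.card_union_of_disjoint (Finset.disjoint_sdiff (s := I) (t := R))
  rw [Finset.union_sdiff_self_eq_union] at this
  omega

lemma hammingNorm_add_card_le [DecidableEq F] {I : Finset ι} {c : ι → F}
    (hc : c ∈ C.vanishingOn I) : hammingNorm c + I.card ≤ Fintype.card ι := by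
  have hdisj : Disjoint (Finset.univ.filter fun j => c j ≠ 0) I :=
    Finset.disjoint_left.mpr fun j hj hjI =>
      (Finset.mem_filter.mp hj).2 ((mem_vanishingOn.mp hc).2 j hjI)
  rw [hammingNorm, ← Finset.card_union_of_disjoint hdisj]
  exact Finset.card_le_univ _

lemma dist_add_card_add_finrank_vanishingOn_le [DecidableEq F] {d : ℕ}
    (hd : ∀ c ∈ C, c ≠ 0 → d ≤ hammingNorm c) {I : Finset ι}
    (hI : 0 < finrank F (C.vanishingOn I)) :
    d + I.card + finrank F (C.vanishingOn I) ≤ Fintype.card ι + 1 := by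
  obtain ⟨m, hm⟩ := Nat.exists_eq_add_of_lt hI
  induction m generalizing I with
  | zero =>
    obtain ⟨c, hc, i, -, hci⟩ := C.exists_apply_ne_zero_of_finrank_vanishingOn_pos hI
    have := hd c (mem_vanishingOn.mp hc).1 fun h => hci (by simp [h])
    have := C.hammingNorm_add_card_le hc
    omega
  | succ m ih =>
    obtain ⟨c, hc, i, hiI, hci⟩ := C.exists_apply_ne_zero_of_finrank_vanishingOn_pos hI
    have := C.finrank_vanishingOn_insert_lt hc hci
    have := C.finrank_vanishingOn_le_insert I i
    have := ih (I := insert i I) (by omega) (by omega)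
    rw [Finset.card_insert_of_notMem hiI] at this
    omega

end Submodule

lemma HasLocality.mono {F : Type*} [Field F] {n : ℕ} {C : Submodule F (Fin n → F)} {i : Fin n}
    {r r' : ℕ} (h : HasLocality F C i r) (hr : r ≤ r') : HasLocality F C i r' := by
  obtain ⟨R, hiR, hR, lam, hlam⟩ := h
  exact ⟨R, hiR, hR.trans hr, lam, hlam⟩

namespace Submodule

variable {F : Type*} [Field F] {n : ℕ} (C : Submodule F (Fin n → F))

lemma exists_vanishingOn_of_hasLocality_of_notMem {I : Finset (Fin n)} {i : Fin n} {r : ℕ}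
    (hiI : i ∉ I) (hloc : HasLocality F C i r) :
    ∃ J : Finset (Fin n), J.card ≤ I.card + r + 1 ∧
      I.card + finrank F (C.vanishingOn I) + 1 ≤ J.card + finrank F (C.vanishingOn J) ∧
      finrank F (C.vanishingOn I) ≤ finrank F (C.vanishingOn J) + r := by
  obtain ⟨R, hiR, hR, lam, hlam⟩ := hloc
  have hi : i ∉ I ∪ R := by simp [hiI, hiR]
  have hrepair := C.vanishingOn_insert_of_repair (I := I ∪ R) Finset.subset_union_right hlam
  have := Finset.card_union_le I R
  have := C.card_add_finrank_vanishingOn_le_union I R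
  have := C.finrank_vanishingOn_le_union I R
  refine ⟨insert i (I ∪ R), ?_, ?_, ?_⟩
  · rw [Finset.card_insert_of_notMem hi]
    omega
  · rw [hrepair, Finset.card_insert_of_notMem hi]
    omega
  · rw [hrepair]
    omega

lemma exists_vanishingOn_of_hasLocality_on {S : Finset (Fin n)} {r : ℕ}
    (hloc : ∀ i ∈ S, HasLocality F C i r) {a : ℕ} (ha : a * (r + 1) < S.card + (r + 1)) :
    ∃ I : Finset (Fin n), I.card ≤ a * (r + 1) ∧
      finrank F C + a ≤ I.card + finrank F (C.vanishingOn I) ∧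
      finrank F C ≤ finrank F (C.vanishingOn I) + a * r := by
  induction a with
  | zero =>
    refine ⟨∅, ?_⟩
    rw [vanishingOn_empty]
    simp
  | succ a ih =>
    have ha' : a * (r + 1) < S.card := by linarith
    obtain ⟨I, hcard, hν, hdim⟩ := ih (by linarith)
    obtain ⟨i, hiS, hiI⟩ : ∃ i ∈ S, i ∉ I :=
      Finset.exists_mem_notMem_of_card_lt_card (hcard.trans_lt ha')
    obtain ⟨J, hJcard, hJν, hJdim⟩ := C.exists_vanishingOn_of_hasLocality_of_notMem hiI (hloc i hiS)
    exact ⟨J, by linarith, by linarith, by linarith⟩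

lemma exists_vanishingOn_of_hasLocality {r : ℕ} (hloc : ∀ i, HasLocality F C i r)
    (I₀ : Finset (Fin n)) {b : ℕ} (hb : b * r < finrank F (C.vanishingOn I₀)) :
    ∃ I : Finset (Fin n),
      I₀.card + finrank F (C.vanishingOn I₀) + b ≤ I.card + finrank F (C.vanishingOn I) ∧
      finrank F (C.vanishingOn I₀) ≤ finrank F (C.vanishingOn I) + b * r := by
  induction b with
  | zero => exact ⟨I₀, by simp⟩
  | succ b ih =>
    obtain ⟨I, hν, hdim⟩ := ih (by linarith)
    obtain ⟨-, -, i, hiI, -⟩ := C.exists_apply_ne_zero_of_finrank_vanishingOn_pos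
      (show 0 < finrank F (C.vanishingOn I) by linarith)
    obtain ⟨J, -, hJν, hJdim⟩ := C.exists_vanishingOn_of_hasLocality_of_notMem hiI (hloc i)
    exact ⟨J, by linarith, by linarith⟩

end Submodule

theorem stmt1_general {F : Type*} [Field F] [DecidableEq F]
    {n n₁ k d r₁ r₂ : ℕ}
    (hr : r₁ < r₂)
    (C : Submodule F (Fin n → F)) (hC : IsLinearCode F C k d)
    (S₁ S₂ : Finset (Fin n)) (hcover : S₁ ∪ S₂ = Finset.univ)
    (hcard₁ : S₁.card = n₁)
    (hloc₁ : ∀ i ∈ S₁, HasLocality F C i r₁)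
    (hloc₂ : ∀ i ∈ S₂, HasLocality F C i r₂)
    (hkr : (r₁ : ℤ) * ⌈(n₁ : ℚ) / ((r₁ : ℚ) + 1)⌉ < (k : ℤ) - 1) :
    (d : ℤ) ≤ (n : ℤ) - k + 2 - ⌈(n₁ : ℚ) / ((r₁ : ℚ) + 1)⌉ -
      ⌈((k : ℚ) - (r₁ : ℚ) * (⌈(n₁ : ℚ) / ((r₁ : ℚ) + 1)⌉ : ℚ)) / (r₂ : ℚ)⌉ := by
  obtain ⟨hk, hd, -⟩ := hC
  have hloc : ∀ i, HasLocality F C i r₂ := fun i => by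
    rcases Finset.mem_union.mp (hcover ▸ Finset.mem_univ i) with h | h
    exacts [(hloc₁ i h).mono hr.le, hloc₂ i h]
  obtain ⟨a, ha⟩ : ∃ a : ℕ, (a : ℤ) = ⌈(n₁ : ℚ) / ((r₁ : ℚ) + 1)⌉ :=
    ⟨_, Int.toNat_of_nonneg (Int.ceil_nonneg (by positivity))⟩
  have hkrQ : (r₁ : ℚ) * a < k - 1 := by exact_mod_cast ha ▸ hkr
  have hr₂ : (0 : ℚ) < r₂ := by exact_mod_cast (Nat.zero_le r₁).trans_lt hr
  obtain ⟨b, hb⟩ : ∃ b : ℕ, (b : ℤ) + 1 = ⌈((k : ℚ) - r₁ * a) / r₂⌉ := by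
    have := Int.ceil_pos.mpr (div_pos (by linarith) hr₂ : (0 : ℚ) < (k - r₁ * a) / r₂)
    exact ⟨(⌈((k : ℚ) - r₁ * a) / r₂⌉ - 1).toNat, by omega⟩
  rw [← ha, Int.cast_natCast, ← hb]
  have ha' : a * (r₁ + 1) < S₁.card + (r₁ + 1) := by
    have := ha ▸ Int.ceil_div_sub_one_mul_lt (n₁ : ℚ) (by positivity : (0 : ℚ) < r₁ + 1)
    rw [hcard₁]
    exact_mod_cast (by push_cast at this ⊢; linarith : (a : ℚ) * (r₁ + 1) < n₁ + (r₁ + 1))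
  have hb' : b * r₂ + a * r₁ < k := by
    have := hb ▸ Int.ceil_div_sub_one_mul_lt ((k : ℚ) - r₁ * a) hr₂
    exact_mod_cast (by push_cast at this; linarith : (b : ℚ) * r₂ + a * r₁ < k)
  obtain ⟨I₁, -, hν₁, hdim₁⟩ := C.exists_vanishingOn_of_hasLocality_on hloc₁ ha'
  obtain ⟨I₂, hν₂, hdim₂⟩ := C.exists_vanishingOn_of_hasLocality hloc I₁ (b := b) (by omega)
  have := C.dist_add_card_add_finrank_vanishingOn_le hd (I := I₂) (by omega)
  rw [Fintype.card_fin] at this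
  omega

theorem stmt1 {F : Type*} [Field F] [Fintype F] [DecidableEq F]
    {n n₁ n₂ k d r₁ r₂ : ℕ}
    (hr₁ : 0 < r₁) (hr : r₁ < r₂)
    (hn : n = n₁ + n₂) (hn₁ : 1 ≤ n₁) (hn₂ : 1 ≤ n₂)
    (C : Submodule F (Fin n → F)) (hC : IsLinearCode F C k d)
    (S₁ S₂ : Finset (Fin n)) (hdisj : Disjoint S₁ S₂) (hcover : S₁ ∪ S₂ = Finset.univ)
    (hcard₁ : S₁.card = n₁) (hcard₂ : S₂.card = n₂)
    (hloc₁ : ∀ i ∈ S₁, HasLocality F C i r₁)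
    (hloc₂ : ∀ i ∈ S₂, HasLocality F C i r₂)
    (hkr : (r₁ : ℤ) * ⌈(n₁ : ℚ) / ((r₁ : ℚ) + 1)⌉ < (k : ℤ) - 1) :
    (d : ℤ) ≤ (n : ℤ) - k + 2 - ⌈(n₁ : ℚ) / ((r₁ : ℚ) + 1)⌉ -
      ⌈((k : ℚ) - (r₁ : ℚ) * (⌈(n₁ : ℚ) / ((r₁ : ℚ) + 1)⌉ : ℚ)) / (r₂ : ℚ)⌉ :=
  stmt1_general hr C hC S₁ S₂ hcover hcard₁ hloc₁ hloc₂ hkr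
end

section
/- Let r_1 < r_2 and n_1, n_2, k be positive integers with (r_1+1) | n_1, and set m = n_1/(r_1+1), n' = n_2 + (r_2+1)m, k' = k + (r_2−r_1)m. Suppose there exists a linear [n', k', d]_q code C in which every coordinate has locality r_2, whose minimum distance satisfies d = n' − k' + 2 − ⌈k'/r_2⌉, and which possesses m pairwise disjoint sets R_1,…,R_m ⊆ {1,…,n'}, each of size r_2+1, such that for each i there exist coefficients λ_j ∈ F_q\{0} (j ∈ R_i) with Σ_{j∈R_i} λ_j c_j = 0 for all c ∈ C. Then there exists a linear code over F_q of length n_1 + n_2, dimension at least k, and minimum Hamming distance at least d, whose coordinates admit a partition into a set of n_1 coordinates each having locality r_1 and a set of n_2 coordinates each having locality r_2; moreover d = n_1 + n_2 − k + 2 − m − ⌈(k − r_1 m)/r_2⌉. -/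
/-!
Shorten `C` on `r₂ - r₁` coordinates of each of the `m` disjoint sets `Rᵢ`: keep the codewords
vanishing there and delete those coordinates. This removes `(r₂ - r₁) m` coordinates and at most
as many dimensions, giving length `n₁ + n₂` and dimension at least `k`, while every nonzero
codeword keeps its weight. The `r₁ + 1` surviving coordinates of each `Rᵢ` still satisfy the
parity check, all of whose coefficients are nonzero, so each of them is a combination of the
other `r₁`; every other coordinate keeps its repair set, minus the deleted coordinates, on which
codewords now vanish. The distance formula is `⌈k' / r₂⌉ = ⌈(k - r₁ m) / r₂⌉ + m`.
-/

open Finset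

section Shortening

variable {F : Type*} [Field F] {ι κ : Type*}

theorem Submodule.finrank_add_le_finrank_comap_add {V W : Type*} [AddCommGroup V] [Module F V]
    [FiniteDimensional F V] [AddCommGroup W] [Module F W] [FiniteDimensional F W]
    (C : Submodule F W) {L : V →ₗ[F] W} (hL : Function.Injective L) :
    Module.finrank F C + Module.finrank F V ≤
      Module.finrank F (C.comap L) + Module.finrank F W := by
  have hmap : Module.finrank F ((C.comap L).map L) = Module.finrank F (C.comap L) :=
    (Submodule.equivMapOfInjective L hL _).finrank_eq.symm
  rw [Submodule.map_comap_eq, inf_comm] at hmap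
  have hsup := Submodule.finrank_sup_add_finrank_inf_eq C (LinearMap.range L)
  rw [LinearMap.finrank_range_of_inj hL] at hsup
  have := (C ⊔ LinearMap.range L).finrank_le
  omega

/-- Shortening of `C` at the coordinates outside the range of `e`: the codewords vanishing there,
read on the coordinates `e`. -/
noncomputable def shortenedCode (C : Submodule F (ι → F)) (e : κ → ι) :
    Submodule F (κ → F) :=
  C.comap (Function.ExtendByZero.linearMap F e)

theorem mem_shortenedCode {C : Submodule F (ι → F)} {e : κ → ι} {c : κ → F} :
    c ∈ shortenedCode C e ↔ Function.extend e c 0 ∈ C :=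
  Iff.rfl

theorem finrank_add_card_le_finrank_shortenedCode_add [Fintype ι] [Fintype κ]
    (C : Submodule F (ι → F)) {e : κ → ι} (he : Function.Injective e) :
    Module.finrank F C + Fintype.card κ ≤
      Module.finrank F (shortenedCode C e) + Fintype.card ι := by
  have hL : Function.Injective (Function.ExtendByZero.linearMap F e) := fun a b hab =>
    funext fun z => by simpa [he.extend_apply] using congrFun hab (e z)
  have := C.finrank_add_le_finrank_comap_add hL
  rwa [Module.finrank_fintype_fun_eq_card, Module.finrank_fintype_fun_eq_card] at this

theorem hammingNorm_extend_zero [Fintype ι] [Fintype κ] [DecidableEq F] {e : κ → ι}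
    (he : Function.Injective e) (c : κ → F) :
    hammingNorm (Function.extend e c 0) = hammingNorm c := by
  have hsupp : ({j | Function.extend e c 0 j ≠ 0} : Finset ι) =
      ({z | c z ≠ 0} : Finset κ).map ⟨e, he⟩ := by
    ext j
    by_cases hj : ∃ z, e z = j
    · obtain ⟨z, rfl⟩ := hj
      simp only [mem_filter, mem_univ, true_and, mem_map,
        Function.Embedding.coeFn_mk, he.extend_apply, he.eq_iff, exists_eq_right]
    · simp only [not_exists] at hj
      simp [hj]
  simp only [hammingNorm, hsupp, card_map]

theorem le_hammingNorm_of_mem_shortenedCode [Fintype ι] [Fintype κ] [DecidableEq F]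
    {C : Submodule F (ι → F)} {e : κ → ι} (he : Function.Injective e) {d : ℕ}
    (hC : ∀ c ∈ C, c ≠ 0 → d ≤ hammingNorm c) :
    ∀ c ∈ shortenedCode C e, c ≠ 0 → d ≤ hammingNorm c := by
  intro c hc hc0
  rw [← hammingNorm_extend_zero he c]
  refine hC _ hc fun h => hc0 (funext fun z => ?_)
  simpa [he.extend_apply] using congrFun h (e z)

theorem sum_mul_extend_zero {e : κ → ι} (he : Function.Injective e) (R : Finset ι)
    (g : ι → F) (c : κ → F) :
    ∑ j ∈ R, g j * Function.extend e c 0 j =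
      ∑ z ∈ R.preimage e he.injOn, g (e z) * c z := by
  rw [← sum_preimage e R he.injOn (fun j => g j * Function.extend e c 0 j)]
  · simp only [he.extend_apply]
  · intro j _ hj
    simp [Function.extend_apply' _ _ _ hj]

theorem card_preimage_of_range_eq_compl [Fintype ι] [DecidableEq ι] {e : κ → ι}
    (he : Function.Injective e) {D : Finset ι} (hrange : Set.range e = ↑Dᶜ) (S : Finset ι) :
    (S.preimage e he.injOn).card = (S \ D).card := by
  classical
  rw [card_preimage]
  congr 1
  ext j
  simp [hrange]

end Shortening

section Locality

variable {F : Type*} [Field F] {n N : ℕ}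

theorem hasLocality_of_parityCheck {C : Submodule F (Fin n → F)} {i : Fin n} {r : ℕ}
    {P : Finset (Fin n)} (hi : i ∈ P) (hP : P.card ≤ r + 1) {lam : Fin n → F}
    (hlam : lam i ≠ 0) (hcheck : ∀ c ∈ C, ∑ j ∈ P, lam j * c j = 0) :
    HasLocality F C i r := by
  refine ⟨P.erase i, notMem_erase i P, by rw [card_erase_of_mem hi]; omega,
    fun j => -lam j / lam i, fun c hc => ?_⟩
  have h := hcheck c hc
  rw [← add_sum_erase P _ hi] at h
  simp only [neg_div, neg_mul, sum_neg_distrib, div_mul_eq_mul_div, ← sum_div]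
  field_simp
  linear_combination h

theorem HasLocality.shortenedCode {C : Submodule F (Fin n → F)} {e : Fin N → Fin n}
    (he : Function.Injective e) {y : Fin N} {r : ℕ} (h : HasLocality F C (e y) r) :
    HasLocality F (shortenedCode C e) y r := by
  obtain ⟨R, hyR, hR, lam, hrep⟩ := h
  refine ⟨R.preimage e he.injOn, by simpa using hyR,
    (card_le_card_of_injOn e (fun z hz => by simpa using hz) he.injOn).trans hR,
    fun z => lam (e z), fun c hc => ?_⟩
  simpa [he.extend_apply, sum_mul_extend_zero he] using hrep _ (mem_shortenedCode.1 hc)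

theorem hasLocality_shortenedCode_of_parityCheck {C : Submodule F (Fin n → F)}
    {e : Fin N → Fin n} (he : Function.Injective e) {y : Fin N} {r : ℕ} {R : Finset (Fin n)}
    (hy : e y ∈ R) (hR : (R.preimage e he.injOn).card ≤ r + 1) {lam : Fin n → F}
    (hlam : lam (e y) ≠ 0) (hcheck : ∀ c ∈ C, ∑ j ∈ R, lam j * c j = 0) :
    HasLocality F (shortenedCode C e) y r :=
  hasLocality_of_parityCheck (P := R.preimage e he.injOn) (lam := fun z => lam (e z))
    (by simpa using hy) hR hlam fun c hc => by
      rw [← hcheck _ (mem_shortenedCode.1 hc), sum_mul_extend_zero he]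

end Locality

theorem pairwiseDisjoint_range_of_lt {α : Type*} [PartialOrder α] [OrderBot α] {f : ℕ → α}
    {m : ℕ} (h : ∀ i j, i < j → j < m → Disjoint (f i) (f j)) :
    (range m : Set ℕ).PairwiseDisjoint f := fun i hi j hj hij =>
  hij.lt_or_gt.elim (fun hlt => h i j hlt (mem_range.1 hj))
    fun hgt => (h j i hgt (mem_range.1 hi)).symm

theorem Finset.exists_subset_biUnion_card_inter {α β : Type*} [DecidableEq β] (I : Finset α)
    {R : α → Finset β} (hR : (I : Set α).PairwiseDisjoint R) {s : ℕ}
    (hs : ∀ i ∈ I, s ≤ (R i).card) :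
    ∃ D ⊆ I.biUnion R, D.card = I.card * s ∧ ∀ i ∈ I, s ≤ (D ∩ R i).card := by
  classical
  have hchoice : ∀ i, ∃ t ⊆ R i, i ∈ I → t.card = s := fun i =>
    if hi : i ∈ I then
      (exists_subset_card_eq (hs i hi)).imp fun _ ht => ⟨ht.1, fun _ => ht.2⟩
    else ⟨∅, empty_subset _, fun h => absurd h hi⟩
  choose t htR htcard using hchoice
  refine ⟨I.biUnion t, biUnion_mono fun i _ => htR i, ?_, fun i hi => ?_⟩
  · rw [card_biUnion (hR.mono fun i => htR i), sum_const_nat htcard]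
  · rw [← htcard i hi]
    exact card_le_card fun j hj =>
      mem_inter.2 ⟨mem_biUnion.2 ⟨i, hi, hj⟩, htR i hj⟩

theorem distance_eq_after_shortening {n₁ n₂ k d r₁ r₂ m n' k' : ℕ} (hr : r₁ < r₂)
    (hn₁ : n₁ = (r₁ + 1) * m)
    (hn' : n' = n₂ + (r₂ + 1) * m) (hk' : k' = k + (r₂ - r₁) * m)
    (hd : (d : ℤ) = (n' : ℤ) - k' + 2 - ⌈(k' : ℚ) / (r₂ : ℚ)⌉) :
    (d : ℤ) = (n₁ : ℤ) + n₂ - k + 2 - m -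
      ⌈((k : ℚ) - (r₁ : ℚ) * m) / (r₂ : ℚ)⌉ := by
  have hr₂ : (r₂ : ℚ) ≠ 0 := Nat.cast_ne_zero.2 (by omega)
  have hceil : ⌈(k' : ℚ) / r₂⌉ = ⌈((k : ℚ) - r₁ * m) / r₂⌉ + m := by
    rw [← Int.ceil_add_natCast]
    congr 1
    rw [hk', Nat.cast_add, Nat.cast_mul, Nat.cast_sub hr.le]
    field_simp
    ring
  rw [hd, hceil, hn', hk', hn₁]
  push_cast [Nat.cast_sub hr.le]
  ring

theorem stmt5_general {F : Type*} [Field F] [DecidableEq F]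
    {n₁ n₂ k d r₁ r₂ m n' k' : ℕ}
    (hr : r₁ < r₂)
    (hdvd : (r₁ + 1) ∣ n₁) (hm : m = n₁ / (r₁ + 1))
    (hn' : n' = n₂ + (r₂ + 1) * m) (hk' : k' = k + (r₂ - r₁) * m)
    (C : Submodule F (Fin n' → F)) (hC : IsLinearCode F C k' d)
    (hloc : ∀ i : Fin n', HasLocality F C i r₂)
    (hd : (d : ℤ) = (n' : ℤ) - k' + 2 - ⌈(k' : ℚ) / (r₂ : ℚ)⌉)
    (Rs : ℕ → Finset (Fin n'))
    (hRdisj : ∀ i j, i < j → j < m → Disjoint (Rs i) (Rs j))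
    (hRcard : ∀ i < m, (Rs i).card = r₂ + 1)
    (hRzero : ∀ i < m, ∃ lam : Fin n' → F, (∀ j ∈ Rs i, lam j ≠ 0) ∧
      ∀ c ∈ C, ∑ j ∈ Rs i, lam j * c j = 0) :
    (∃ C' : Submodule F (Fin (n₁ + n₂) → F),
      k ≤ Module.finrank F C' ∧
      (∀ c ∈ C', c ≠ 0 → d ≤ hammingNorm c) ∧
      ∃ A B : Finset (Fin (n₁ + n₂)), Disjoint A B ∧ A ∪ B = Finset.univ ∧
        A.card = n₁ ∧ B.card = n₂ ∧
        (∀ x ∈ A, HasLocality F C' x r₁) ∧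
        (∀ x ∈ B, HasLocality F C' x r₂)) ∧
    (d : ℤ) = (n₁ : ℤ) + n₂ - k + 2 - m - ⌈((k : ℚ) - (r₁ : ℚ) * m) / (r₂ : ℚ)⌉ := by
  classical
  have hn₁ : n₁ = (r₁ + 1) * m := by rw [hm, Nat.mul_div_cancel' hdvd]
  have hsplit : (r₂ + 1) * m = (r₂ - r₁) * m + (r₁ + 1) * m := by
    rw [← add_mul]; congr 1; omega
  have hdisj := pairwiseDisjoint_range_of_lt hRdisj
  obtain ⟨D, hDU, hDcard, hRD⟩ := (range m).exists_subset_biUnion_card_inter hdisj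
    (s := r₂ - r₁) fun i hi => by rw [hRcard i (mem_range.1 hi)]; omega
  set U := (range m).biUnion Rs
  have hUcard : U.card = (r₂ + 1) * m := by
    rw [card_biUnion hdisj, sum_const_nat fun i hi => hRcard i (mem_range.1 hi), card_range,
      mul_comm]
  rw [card_range, mul_comm] at hDcard
  have hT : Dᶜ.card = n₁ + n₂ := by
    rw [card_compl, Fintype.card_fin]; omega
  set e := Dᶜ.orderEmbOfFin hT
  have he : Function.Injective e := e.injective
  have hrange : Set.range e = ↑Dᶜ := Dᶜ.range_orderEmbOfFin hT
  have hA : (U.preimage e he.injOn).card = n₁ := by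
    rw [card_preimage_of_range_eq_compl he hrange, card_sdiff_of_subset hDU]; omega
  have hB : (U.preimage e he.injOn)ᶜ.card = n₂ := by
    rw [card_compl, Fintype.card_fin, hA]; omega
  refine ⟨⟨shortenedCode C e, ?_, le_hammingNorm_of_mem_shortenedCode he hC.2.1,
    U.preimage e he.injOn, (U.preimage e he.injOn)ᶜ, disjoint_compl_right, union_compl _, hA, hB,
    ?_, fun y _ => (hloc (e y)).shortenedCode he⟩,
    distance_eq_after_shortening hr hn₁ hn' hk' hd⟩
  · have := finrank_add_card_le_finrank_shortenedCode_add C he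
    rw [hC.1, Fintype.card_fin, Fintype.card_fin] at this
    omega
  · intro y hy
    obtain ⟨i, hi, hyi⟩ := mem_biUnion.1 (mem_preimage.1 hy)
    obtain ⟨lam, hlam, hcheck⟩ := hRzero i (mem_range.1 hi)
    refine hasLocality_shortenedCode_of_parityCheck he hyi ?_ (hlam _ hyi) hcheck
    have := hRD i hi
    rw [card_preimage_of_range_eq_compl he hrange, card_sdiff, hRcard i (mem_range.1 hi)]
    omega

theorem stmt5 {F : Type*} [Field F] [Fintype F] [DecidableEq F]
    {n₁ n₂ k d r₁ r₂ m n' k' : ℕ}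
    (hr₁ : 0 < r₁) (hr : r₁ < r₂) (hn₁ : 0 < n₁) (hn₂ : 0 < n₂) (hk : 0 < k)
    (hdvd : (r₁ + 1) ∣ n₁) (hm : m = n₁ / (r₁ + 1))
    (hn' : n' = n₂ + (r₂ + 1) * m) (hk' : k' = k + (r₂ - r₁) * m)
    (C : Submodule F (Fin n' → F)) (hC : IsLinearCode F C k' d)
    (hloc : ∀ i : Fin n', HasLocality F C i r₂)
    (hd : (d : ℤ) = (n' : ℤ) - k' + 2 - ⌈(k' : ℚ) / (r₂ : ℚ)⌉)
    (Rs : ℕ → Finset (Fin n'))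
    (hRdisj : ∀ i j, i < j → j < m → Disjoint (Rs i) (Rs j))
    (hRcard : ∀ i < m, (Rs i).card = r₂ + 1)
    (hRzero : ∀ i < m, ∃ lam : Fin n' → F, (∀ j ∈ Rs i, lam j ≠ 0) ∧
      ∀ c ∈ C, ∑ j ∈ Rs i, lam j * c j = 0) :
    (∃ C' : Submodule F (Fin (n₁ + n₂) → F),
      k ≤ Module.finrank F C' ∧
      (∀ c ∈ C', c ≠ 0 → d ≤ hammingNorm c) ∧
      ∃ A B : Finset (Fin (n₁ + n₂)), Disjoint A B ∧ A ∪ B = Finset.univ ∧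
        A.card = n₁ ∧ B.card = n₂ ∧
        (∀ x ∈ A, HasLocality F C' x r₁) ∧
        (∀ x ∈ B, HasLocality F C' x r₂)) ∧
    (d : ℤ) = (n₁ : ℤ) + n₂ - k + 2 - m - ⌈((k : ℚ) - (r₁ : ℚ) * m) / (r₂ : ℚ)⌉ :=
  stmt5_general hr hdvd hm hn' hk' C hC hloc hd Rs hRdisj hRcard hRzero
end

section
/- Let s ≥ 1, let r_1 < … < r_s be positive integers, and let C be a linear [n,k,d]_q code with a partition of {1,…,n} into pairwise disjoint sets S_1,…,S_s, |S_i| = n_i, such that every coordinate i ∈ S_i has locality r_i with a repair set contained in S_i. Then for every i ∈ {1,…,s} and every integer t_i with 1 ≤ t_i ≤ ⌈n_i/(r_i+1)⌉ there exists a set I_i ⊆ S_i with |I_i| = min(t_i(r_i+1), n_i) and H(I_i) ≤ t_i·r_i. -/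
open Finset

open Finset

section Aux

variable {F : Type*} [Field F] {n : ℕ} (C : Submodule F (Fin n → F))

noncomputable def projMap (I : Finset (Fin n)) :
    (Fin n → F) →ₗ[F] ({x // x ∈ I} → F) :=
  LinearMap.funLeft F F (fun i : {x // x ∈ I} => (i : Fin n))

lemma projDim_eq (I : Finset (Fin n)) :
    projDim F C I = Module.finrank F (C.map (projMap I)) := rfl

lemma projDim_le_card (I : Finset (Fin n)) : projDim F C I ≤ I.card := by
  rw [projDim_eq]
  refine le_trans (Submodule.finrank_le _) ?_
  rw [Module.finrank_fintype_fun_eq_card, Fintype.card_coe]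

lemma projMap_factor {I I' : Finset (Fin n)} (h : I ⊆ I') :
    (projMap (F := F) I) =
      (LinearMap.funLeft F F (fun x : {x // x ∈ I} => (⟨x.1, h x.2⟩ : {x // x ∈ I'}))).comp
        (projMap I') := by
  rw [projMap, projMap, ← LinearMap.funLeft_comp]
  rfl

lemma projDim_mono {I I' : Finset (Fin n)} (h : I ⊆ I') :
    projDim F C I ≤ projDim F C I' := by
  rw [projDim_eq, projDim_eq, projMap_factor (F := F) h, Submodule.map_comp]
  exact Submodule.finrank_map_le _ _

lemma projDim_le_add {I I' : Finset (Fin n)} (h : I ⊆ I') :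
    projDim F C I' ≤ projDim F C I + (I' \ I).card := by
  classical
  set V := C.map (projMap (F := F) I') with hV
  set g : ({x // x ∈ I'} → F) →ₗ[F] ({x // x ∈ I} → F) :=
    LinearMap.funLeft F F (fun x : {x // x ∈ I} => (⟨x.1, h x.2⟩ : {x // x ∈ I'})) with hg
  set g' : V →ₗ[F] ({x // x ∈ I} → F) := g.comp V.subtype with hg'
  have hrange : LinearMap.range g' = C.map (projMap (F := F) I) := by
    rw [hg', LinearMap.range_comp, Submodule.range_subtype, hV,
      projMap_factor (F := F) h, Submodule.map_comp]
  have hrn := LinearMap.finrank_range_add_finrank_ker g'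
  -- bound the kernel
  have hker : Module.finrank F (LinearMap.ker g') ≤ (I' \ I).card := by
    set ψ : ({x // x ∈ I'} → F) →ₗ[F] ({x // x ∈ I' \ I} → F) :=
      LinearMap.funLeft F F
        (fun x : {x // x ∈ I' \ I} => (⟨x.1, (Finset.mem_sdiff.mp x.2).1⟩ : {x // x ∈ I'})) with hψ
    set ψ' : (LinearMap.ker g') →ₗ[F] ({x // x ∈ I' \ I} → F) :=
      ψ.comp (V.subtype.comp (LinearMap.ker g').subtype) with hψ'
    have hinj : Function.Injective ψ' := by
      intro u v huv
      have hker_u := u.2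
      have hker_v := v.2
      apply Subtype.ext; apply Subtype.ext
      funext x
      rcases x with ⟨x, hx⟩
      by_cases hxI : x ∈ I
      · have hu : g' u = 0 := u.2
        have hv : g' v = 0 := v.2
        have hu' := congrFun hu ⟨x, hxI⟩
        have hv' := congrFun hv ⟨x, hxI⟩
        simp only [hg', hg, LinearMap.comp_apply, LinearMap.funLeft_apply,
          Pi.zero_apply, Submodule.coe_subtype] at hu' hv'
        exact hu'.trans hv'.symm
      · have hx' : x ∈ I' \ I := Finset.mem_sdiff.mpr ⟨hx, hxI⟩
        have := congrFun huv ⟨x, hx'⟩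
        simpa [hψ', hψ, LinearMap.funLeft_apply] using this
    calc Module.finrank F (LinearMap.ker g')
        ≤ Module.finrank F ({x // x ∈ I' \ I} → F) :=
          LinearMap.finrank_le_finrank_of_injective hinj
      _ = (I' \ I).card := by
          rw [Module.finrank_fintype_fun_eq_card, Fintype.card_coe]
  have : projDim F C I' = Module.finrank F V := rfl
  rw [this, ← hrn, hrange]
  exact Nat.add_le_add le_rfl hker

lemma projDim_insert_le {I R : Finset (Fin n)} {a : Fin n} (hRI : R ⊆ I)
    (lam : Fin n → F) (hrep : ∀ c ∈ C, c a = ∑ j ∈ R, lam j * c j) :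
    projDim F C (insert a I) ≤ projDim F C I := by
  classical
  set g : ({x // x ∈ I} → F) →ₗ[F] ({x // x ∈ insert a I} → F) :=
    { toFun := fun v x =>
        if hx : (x : Fin n) ∈ I then v ⟨x, hx⟩
        else ∑ j ∈ R.attach, lam j * v ⟨j.1, hRI j.2⟩
      map_add' := by
        intro u v
        funext x
        by_cases hx : (x : Fin n) ∈ I <;>
          simp [hx, mul_add, Finset.sum_add_distrib]
      map_smul' := by
        intro c v
        funext x
        by_cases hx : (x : Fin n) ∈ I <;>
          simp [hx, Finset.mul_sum, mul_left_comm] } with hgdef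
  have hle : C.map (projMap (F := F) (insert a I)) ≤
      (C.map (projMap (F := F) I)).map g := by
    rintro y ⟨c, hc, rfl⟩
    refine ⟨projMap (F := F) I c, ⟨c, hc, rfl⟩, ?_⟩
    funext x
    rcases x with ⟨x, hx⟩
    by_cases hxI : x ∈ I
    · simp [hgdef, projMap, hxI, LinearMap.funLeft_apply]
    · have hxa : x = a := by
        rcases Finset.mem_insert.mp hx with h | h
        · exact h
        · exact absurd h hxI
      subst hxa
      simp only [hgdef, projMap, LinearMap.funLeft_apply, LinearMap.coe_mk,
        AddHom.coe_mk, hxI, dif_neg, not_false_iff]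
      rw [Finset.sum_attach R (fun j => lam j * c j)]
      exact (hrep c hc).symm
  calc projDim F C (insert a I)
      ≤ Module.finrank F ((C.map (projMap (F := F) I)).map g) :=
        Submodule.finrank_mono hle
    _ ≤ Module.finrank F (C.map (projMap (F := F) I)) :=
        Submodule.finrank_map_le _ _
    _ = projDim F C I := rfl

lemma key_lemma (S : Finset (Fin n)) (r : ℕ)
    (hloc : ∀ x ∈ S, HasLocalityIn F C x r S) :
    ∀ j : ℕ, ∃ I : Finset (Fin n), I ⊆ S ∧
      I.card = min (j * (r + 1)) S.card ∧ projDim F C I ≤ j * r := by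
  classical
  intro j
  induction j with
  | zero =>
    refine ⟨∅, Finset.empty_subset _, by simp, ?_⟩
    simpa using projDim_le_card C ∅
  | succ j ih =>
    obtain ⟨I, hIS, hcard, hrank⟩ := ih
    by_cases hI : I = S
    · subst hI
      have hSle : I.card ≤ j * (r + 1) := by omega
      refine ⟨I, Finset.Subset.refl _, ?_, ?_⟩
      · have : min ((j + 1) * (r + 1)) I.card = I.card := by
          apply min_eq_right; nlinarith
        omega
      · calc projDim F C I ≤ j * r := hrank
          _ ≤ (j + 1) * r := by nlinarith
    · have hss : I ⊂ S := Finset.ssubset_iff_subset_ne.mpr ⟨hIS, hI⟩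
      have hcardlt : I.card < S.card := Finset.card_lt_card hss
      have hIcard : I.card = j * (r + 1) := by omega
      obtain ⟨x, hxS, hxI⟩ := Finset.exists_of_ssubset hss
      obtain ⟨R, hRS, hxR, hRcard, lam, hrep⟩ := hloc x hxS
      set I₁ := insert x (I ∪ R) with hI₁
      have hI₁S : I₁ ⊆ S := by
        intro y hy
        rcases Finset.mem_insert.mp hy with h | h
        · exact h ▸ hxS
        · rcases Finset.mem_union.mp h with h' | h'
          · exact hIS h'
          · exact hRS h'
      have hsub : R \ I ⊆ R := Finset.sdiff_subset
      have ha : (R \ I).card ≤ r := le_trans (Finset.card_le_card hsub) hRcard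
      have hunion : I ∪ (R \ I) = I ∪ R := Finset.union_sdiff_self_eq_union
      have hcardIR : (I ∪ R).card = I.card + (R \ I).card := by
        rw [← hunion, Finset.card_union_of_disjoint (Finset.disjoint_sdiff)]
      have hxIR : x ∉ I ∪ R := by
        intro h
        rcases Finset.mem_union.mp h with h' | h'
        exacts [hxI h', hxR h']
      have hcardI₁ : I₁.card = I.card + (R \ I).card + 1 := by
        rw [hI₁, Finset.card_insert_of_notMem hxIR, hcardIR]
      -- rank bound for I₁
      have hrank1 : projDim F C I₁ ≤ projDim F C (I ∪ R) :=
        projDim_insert_le C (Finset.subset_union_right) lam hrep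
      have hrank2 : projDim F C (I ∪ R) ≤ projDim F C I + ((I ∪ R) \ I).card :=
        projDim_le_add C Finset.subset_union_left
      have hsdiff : (I ∪ R) \ I = R \ I := by
        rw [Finset.union_sdiff_left]
      have hrankI₁ : projDim F C I₁ ≤ j * r + (R \ I).card := by
        rw [hsdiff] at hrank2
        omega
      -- pad
      set m := min ((j + 1) * (r + 1)) S.card with hm
      have hI₁m : I₁.card ≤ m := by
        have h1 : I₁.card ≤ (j + 1) * (r + 1) := by
          rw [hcardI₁, hIcard]; nlinarith
        have h2 : I₁.card ≤ S.card := Finset.card_le_card hI₁S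
        omega
      have hmS : m ≤ S.card := min_le_right _ _
      obtain ⟨J, hI₁J, hJS, hJcard⟩ := Finset.exists_subsuperset_card_eq hI₁S hI₁m hmS
      refine ⟨J, hJS, hJcard, ?_⟩
      have hrankJ : projDim F C J ≤ projDim F C I₁ + (J \ I₁).card :=
        projDim_le_add C hI₁J
      have hJsd : (J \ I₁).card = m - I₁.card := by
        rw [Finset.card_sdiff_of_subset hI₁J, hJcard]
      have hmle : m ≤ (j + 1) * (r + 1) := min_le_left _ _
      have hexp : (j + 1) * (r + 1) = j * (r + 1) + r + 1 := by ring
      have hexp2 : (j + 1) * r = j * r + r := by ring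
      omega

end Aux

theorem stmt8 {F : Type*} [Field F] [Fintype F] [DecidableEq F]
    {n k d s : ℕ} (hs : 1 ≤ s)
    (r nn : ℕ → ℕ)
    (hrpos : ∀ i < s, 0 < r i)
    (hrmono : ∀ i j, i < j → j < s → r i < r j)
    (C : Submodule F (Fin n → F)) (hC : IsLinearCode F C k d)
    (S : ℕ → Finset (Fin n))
    (hdisj : ∀ i j, i < j → j < s → Disjoint (S i) (S j))
    (hcover : (Finset.range s).biUnion S = Finset.univ)
    (hcard : ∀ i < s, (S i).card = nn i)
    (hloc : ∀ i < s, ∀ x ∈ S i, HasLocalityIn F C x (r i) (S i)) :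
    ∀ i < s, ∀ t : ℕ, 1 ≤ t → (t : ℤ) ≤ ⌈(nn i : ℚ) / ((r i : ℚ) + 1)⌉ →
      ∃ I : Finset (Fin n), I ⊆ S i ∧
        I.card = min (t * (r i + 1)) (nn i) ∧
        projDim F C I ≤ t * r i := by
  intro i hi t _ _
  obtain ⟨I, hIS, hIcard, hIrank⟩ := key_lemma C (S i) (r i) (hloc i hi) t
  exact ⟨I, hIS, by rw [hIcard, hcard i hi], hIrank⟩
end

section
/- Let n, k, d, n_1, n_2, r_1, r_2 be positive integers with n = n_1 + n_2, r_1 < r_2, and r_1·⌈n_1/(r_1+1)⌉ < k − 1. Set t_1 = ⌈n_1/(r_1+1)⌉ and t_2 = ⌊(k − 1 − r_1 t_1)/r_2⌋. If k ≤ n − d + 1 − t_1 − t_2, then d ≤ n − k + 2 − ⌈n_1/(r_1+1)⌉ − ⌈(k − r_1·⌈n_1/(r_1+1)⌉)/r_2⌉. (In other words, the alphabet-dependent bound, weakened by replacing the optimal dimension by the Singleton bound, already implies the two-locality Singleton bound.) -/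
theorem stmt12 {n k d n₁ n₂ r₁ r₂ : ℕ} {t₁ t₂ : ℤ}
    (hn : 0 < n) (hk : 0 < k) (hd : 0 < d) (hn₁ : 0 < n₁) (hn₂ : 0 < n₂)
    (hr₁ : 0 < r₁) (hr : r₁ < r₂)
    (hnsum : n = n₁ + n₂)
    (hkr : (r₁ : ℤ) * ⌈(n₁ : ℚ) / ((r₁ : ℚ) + 1)⌉ < (k : ℤ) - 1)
    (ht₁ : t₁ = ⌈(n₁ : ℚ) / ((r₁ : ℚ) + 1)⌉)
    (ht₂ : t₂ = ⌊((k : ℚ) - 1 - (r₁ : ℚ) * (t₁ : ℚ)) / (r₂ : ℚ)⌋)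
    (h : (k : ℤ) ≤ (n : ℤ) - d + 1 - t₁ - t₂) :
    (d : ℤ) ≤ (n : ℤ) - k + 2 - ⌈(n₁ : ℚ) / ((r₁ : ℚ) + 1)⌉ -
      ⌈((k : ℚ) - (r₁ : ℚ) * (⌈(n₁ : ℚ) / ((r₁ : ℚ) + 1)⌉ : ℚ)) / (r₂ : ℚ)⌉ := by
  have hr₂ : (0 : ℚ) < (r₂ : ℚ) := by exact_mod_cast hr₁.trans hr
  have key : ⌈((k : ℚ) - (r₁ : ℚ) * (t₁ : ℚ)) / (r₂ : ℚ)⌉ ≤ t₂ + 1 := by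
    rw [Int.ceil_le]
    have h1 : ((k : ℚ) - 1 - (r₁ : ℚ) * (t₁ : ℚ)) / (r₂ : ℚ) < (t₂ : ℚ) + 1 := by
      rw [ht₂]; exact Int.lt_floor_add_one _
    rw [div_lt_iff₀ hr₂] at h1
    -- integers: (k - 1 - r₁*t₁ : ℤ) < (t₂+1)*r₂  →  k - r₁*t₁ ≤ (t₂+1)*r₂
    have h2 : (k : ℤ) - 1 - (r₁ : ℤ) * t₁ < (t₂ + 1) * (r₂ : ℤ) := by
      exact_mod_cast h1
    have h3 : (k : ℤ) - (r₁ : ℤ) * t₁ ≤ (t₂ + 1) * (r₂ : ℤ) := by omega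
    rw [div_le_iff₀ hr₂]
    push_cast
    exact_mod_cast h3
  rw [← ht₁] at *
  push_cast []
  linarith [key, h]
end

section
/- Let r ≥ 2 and t ≥ 1 be integers and let C be a linear [n,k,d]_q code with k ≥ 2 in which every coordinate has locality r and whose dimension satisfies k = t·r + k_opt^{(q)}(n − t(r+1), d). Suppose some coordinate i has a repair set R of size exactly r with all coefficients nonzero, and some codeword of C is nonzero at i. Then there exists a linear [n−1, k−1, d']_q code with d' ≥ d whose coordinates admit a partition into a set of r coordinates each having locality r−1 and a set of n−1−r coordinates each having locality r, and moreover k − 1 = (r−1) + (t−1)·r + k_opt^{(q)}((n−1) − r − (t−1)(r+1), d). -/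
set_option maxHeartbeats 1000000
set_option synthInstance.maxHeartbeats 400000


open Finset

theorem stmt14 {F : Type*} [Field F] [Fintype F] [DecidableEq F] {n k d r t : ℕ}
    (hr : 2 ≤ r) (ht : 1 ≤ t) (hk : 2 ≤ k)
    (C : Submodule F (Fin n → F)) (hC : IsLinearCode F C k d)
    (hloc : ∀ i : Fin n, HasLocality F C i r)
    (hkopt : k = t * r + kopt F (n - t * (r + 1)) d)
    (i : Fin n) (R : Finset (Fin n)) (lam : Fin n → F)
    (hiR : i ∉ R) (hRcard : R.card = r) (hlam : ∀ j ∈ R, lam j ≠ 0)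
    (hrepair : ∀ c ∈ C, c i = ∑ j ∈ R, lam j * c j)
    (hnz : ∃ c ∈ C, c i ≠ 0) :
    (∃ (C' : Submodule F (Fin (n - 1) → F)) (d' : ℕ), d ≤ d' ∧
      IsLinearCode F C' (k - 1) d' ∧
      ∃ A B : Finset (Fin (n - 1)), Disjoint A B ∧ A ∪ B = Finset.univ ∧
        A.card = r ∧ B.card = n - 1 - r ∧
        (∀ x ∈ A, HasLocality F C' x (r - 1)) ∧
        (∀ x ∈ B, HasLocality F C' x r)) ∧
    k - 1 = (r - 1) + (t - 1) * r + kopt F ((n - 1) - r - (t - 1) * (r + 1)) d := by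
  classical
  obtain ⟨m, rfl⟩ : ∃ m, n = m + 1 := ⟨n - 1, (Nat.succ_pred_eq_of_pos i.pos).symm⟩
  simp only [Nat.add_sub_cancel]
  set e : Fin m → Fin (m + 1) := i.succAbove with he
  have hei : Function.Injective e := Fin.succAbove_right_injective
  have hex : ∀ j : Fin (m + 1), j ≠ i → ∃ y, e y = j := fun j hj =>
    Fin.exists_succAbove_eq hj
  have heni : ∀ y, e y ≠ i := fun y => Fin.succAbove_ne i y
  -- preimage of a finset avoiding i
  set pre : Finset (Fin (m + 1)) → Finset (Fin m) :=
    fun S => Finset.univ.filter (fun y => e y ∈ S) with hpre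
  have himg : ∀ S : Finset (Fin (m + 1)), i ∉ S → (pre S).image e = S := by
    intro S hS
    ext j
    simp only [hpre, Finset.mem_image, Finset.mem_filter, Finset.mem_univ, true_and]
    constructor
    · rintro ⟨y, hy, rfl⟩; exact hy
    · intro hj
      obtain ⟨y, rfl⟩ := hex j (by rintro rfl; exact hS hj)
      exact ⟨y, hj, rfl⟩
  have hcardpre : ∀ S : Finset (Fin (m + 1)), i ∉ S → (pre S).card = S.card := by
    intro S hS
    rw [← Finset.card_image_of_injective (pre S) hei, himg S hS]
  have hsum : ∀ (S : Finset (Fin (m + 1))), i ∉ S → ∀ (g : Fin (m + 1) → F),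
      ∑ j ∈ S, g j = ∑ y ∈ pre S, g (e y) := by
    intro S hS g
    have h := Finset.sum_image (s := pre S) (g := e) (f := g) (fun a _ b _ h => hei h)
    rw [himg S hS] at h
    exact h
  -- the projection map
  set π : (Fin (m + 1) → F) →ₗ[F] (Fin m → F) := LinearMap.funLeft F F e with hπ
  have hπ_apply : ∀ (c : Fin (m + 1) → F) (y : Fin m), π c y = c (e y) := fun _ _ => rfl
  -- the coordinate functional
  set f : C →ₗ[F] F := (LinearMap.proj i).comp C.subtype with hf
  have hf_apply : ∀ x : C, f x = (x : Fin (m + 1) → F) i := fun _ => rfl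
  have hfsurj : Function.Surjective f := by
    obtain ⟨c, hc, hci⟩ := hnz
    intro a
    refine ⟨(a * (c i)⁻¹) • ⟨c, hc⟩, ?_⟩
    show (a * (c i)⁻¹) * c i = a
    rw [mul_assoc, inv_mul_cancel₀ hci, mul_one]
  have hker : Module.finrank F (LinearMap.ker f) = k - 1 := by
    have h1 := LinearMap.finrank_range_add_finrank_ker f
    rw [LinearMap.range_eq_top.mpr hfsurj, finrank_top, Module.finrank_self] at h1
    have h2 := hC.1
    omega
  set g : (LinearMap.ker f) →ₗ[F] (Fin m → F) :=
    π ∘ₗ (C.subtype ∘ₗ (LinearMap.ker f).subtype) with hg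
  have hg_apply : ∀ x : LinearMap.ker f, ∀ y : Fin m,
      g x y = ((x : C) : Fin (m + 1) → F) (e y) := fun _ _ => rfl
  have hg0 : ∀ x : LinearMap.ker f, g x = 0 → x = 0 := by
    intro x hx
    have hxi : ((x : C) : Fin (m + 1) → F) i = 0 := x.2
    apply Subtype.ext; apply Subtype.ext; funext j
    by_cases hj : j = i
    · rw [hj]; exact hxi
    · obtain ⟨y, rfl⟩ := hex j hj
      have := congrFun hx y
      rwa [hg_apply] at this
  have hginj : Function.Injective g := by
    intro x y hxy
    have h0 : g (x - y) = 0 := by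
      have hms : g (x - y) = g x - g y := map_sub g x y
      rw [hms, hxy, sub_self]
    exact eq_of_sub_eq_zero (hg0 (x - y) h0)
  set C' : Submodule F (Fin m → F) := LinearMap.range g with hC'
  have hrank : Module.finrank F C' = k - 1 := by
    rw [hC', LinearMap.finrank_range_of_inj hginj, hker]
  have hmem : ∀ c' : Fin m → F, c' ∈ C' ↔
      ∃ c, c ∈ C ∧ c i = 0 ∧ ∀ y, c' y = c (e y) := by
    intro c'
    constructor
    · rintro ⟨x, rfl⟩
      exact ⟨((x : C) : Fin (m + 1) → F), (x : C).2, x.2, fun y => rfl⟩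
    · rintro ⟨c, hc, hc0, hcy⟩
      refine ⟨⟨⟨c, hc⟩, hc0⟩, ?_⟩
      funext y
      rw [hg_apply]
      exact (hcy y).symm
  have hnorm : ∀ c : Fin (m + 1) → F, c i = 0 →
      hammingNorm (fun y => c (e y)) = hammingNorm c := by
    intro c hc0
    show (Finset.univ.filter (fun y => c (e y) ≠ 0)).card
      = (Finset.univ.filter (fun j => c j ≠ 0)).card
    rw [← Finset.card_image_of_injective _ hei]
    congr 1
    ext j
    simp only [Finset.mem_image, Finset.mem_filter, Finset.mem_univ, true_and]
    constructor
    · rintro ⟨y, hy, rfl⟩; exact hy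
    · intro hj
      obtain ⟨y, rfl⟩ := hex j (by rintro rfl; exact hj hc0)
      exact ⟨y, hj, rfl⟩
  -- lower bound on weights in C'
  have hlow : ∀ c' ∈ C', c' ≠ 0 → d ≤ hammingNorm c' := by
    intro c' hc' hne
    obtain ⟨c, hc, hc0, hcy⟩ := (hmem c').mp hc'
    have hcne : c ≠ 0 := by
      rintro rfl
      apply hne
      funext y; rw [hcy y]; rfl
    have : c' = fun y => c (e y) := funext hcy
    rw [this, hnorm c hc0]
    exact hC.2.1 c hc hcne
  -- a nonzero element of C'
  have hex0 : ∃ c' ∈ C', c' ≠ 0 := by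
    by_contra h
    push_neg at h
    have : C' = ⊥ := by
      rw [Submodule.eq_bot_iff]
      exact fun x hx => h x hx
    rw [this, finrank_bot] at hrank
    omega
  set W : Set ℕ := {w | ∃ c' ∈ C', c' ≠ 0 ∧ hammingNorm c' = w} with hW
  have hWne : W.Nonempty := by
    obtain ⟨c', hc', hne⟩ := hex0
    exact ⟨hammingNorm c', c', hc', hne, rfl⟩
  set d' : ℕ := sInf W with hd'
  obtain ⟨c₀, hc₀, hc₀ne, hc₀w⟩ := Nat.sInf_mem hWne
  have hdd' : d ≤ d' := by rw [hd', ← hc₀w]; exact hlow c₀ hc₀ hc₀ne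
  have hd'min : ∀ c' ∈ C', c' ≠ 0 → d' ≤ hammingNorm c' := by
    intro c' hc' hne
    exact Nat.sInf_le ⟨c', hc', hne, rfl⟩
  -- locality sets
  set A : Finset (Fin m) := pre R with hA
  set B : Finset (Fin m) := Aᶜ with hB
  have hAcard : A.card = r := by rw [hA, hcardpre R hiR, hRcard]
  refine ⟨⟨C', d', hdd', ⟨hrank, hd'min, c₀, hc₀, hc₀ne, hc₀w⟩, A, B, disjoint_compl_right,
    Finset.union_compl A, hAcard, ?_, ?_, ?_⟩, ?_⟩
  · rw [hB, Finset.card_compl, hAcard, Fintype.card_fin]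
    omega
  · -- locality r - 1 for x ∈ A
    intro x hx
    have hexR : e x ∈ R := by
      have := hx; rw [hA, hpre] at this
      simpa using this
    refine ⟨A.erase x, Finset.notMem_erase x A, ?_,
      fun y => -((lam (e x))⁻¹ * lam (e y)), ?_⟩
    · rw [Finset.card_erase_of_mem hx, hAcard]
    · intro c' hc'
      obtain ⟨c, hc, hc0, hcy⟩ := (hmem c').mp hc'
      have hsum0 : ∑ y ∈ A, lam (e y) * c' y = 0 :=
        calc ∑ y ∈ A, lam (e y) * c' y
            = ∑ y ∈ pre R, lam (e y) * c (e y) := by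
              rw [hA]; exact Finset.sum_congr rfl fun y _ => by rw [hcy y]
          _ = ∑ j ∈ R, lam j * c j := (hsum R hiR (fun j => lam j * c j)).symm
          _ = c i := (hrepair c hc).symm
          _ = 0 := hc0
      have hsplit : lam (e x) * c' x + ∑ y ∈ A.erase x, lam (e y) * c' y = 0 := by
        rw [Finset.add_sum_erase A (fun y => lam (e y) * c' y) hx]
        exact hsum0
      have hlx : lam (e x) ≠ 0 := hlam _ hexR
      have : lam (e x) * c' x = -∑ y ∈ A.erase x, lam (e y) * c' y :=
        eq_neg_of_add_eq_zero_left hsplit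
      calc c' x = (lam (e x))⁻¹ * (lam (e x) * c' x) := by
            rw [← mul_assoc, inv_mul_cancel₀ hlx, one_mul]
        _ = (lam (e x))⁻¹ * (-∑ y ∈ A.erase x, lam (e y) * c' y) := by rw [this]
        _ = ∑ y ∈ A.erase x, -((lam (e x))⁻¹ * lam (e y)) * c' y := by
            rw [mul_neg, Finset.mul_sum, ← Finset.sum_neg_distrib]
            exact Finset.sum_congr rfl fun y _ => by ring
  · -- locality r for x ∈ B
    intro x hx
    obtain ⟨Rx, hxRx, hRxcard, μ, hμ⟩ := hloc (e x)
    have hiRx : i ∉ Rx.erase i := Finset.notMem_erase i Rx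
    refine ⟨pre (Rx.erase i), ?_, ?_, fun y => μ (e y), ?_⟩
    · intro hmem'
      rw [hpre] at hmem'
      simp only [Finset.mem_filter, Finset.mem_univ, true_and] at hmem'
      exact hxRx (Finset.mem_of_mem_erase hmem')
    · calc (pre (Rx.erase i)).card = (Rx.erase i).card := hcardpre _ hiRx
        _ ≤ Rx.card := Finset.card_erase_le
        _ ≤ r := hRxcard
    · intro c' hc'
      obtain ⟨c, hc, hc0, hcy⟩ := (hmem c').mp hc'
      have h1 : c (e x) = ∑ j ∈ Rx.erase i, μ j * c j := by
        rw [hμ c hc]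
        by_cases hi : i ∈ Rx
        · rw [← Finset.add_sum_erase Rx _ hi, hc0, mul_zero, zero_add]
        · rw [Finset.erase_eq_of_notMem hi]
      calc c' x = c (e x) := hcy x
        _ = ∑ j ∈ Rx.erase i, μ j * c j := h1
        _ = ∑ y ∈ pre (Rx.erase i), μ (e y) * c (e y) :=
            hsum _ hiRx (fun j => μ j * c j)
        _ = ∑ y ∈ pre (Rx.erase i), μ (e y) * c' y :=
            Finset.sum_congr rfl fun y _ => by rw [hcy y]

  · -- the arithmetic identity
    obtain ⟨s, rfl⟩ : ∃ s, t = s + 1 := ⟨t - 1, by omega⟩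
    have hidx : m - r - (s + 1 - 1) * (r + 1) = m + 1 - (s + 1) * (r + 1) := by
      have h1 : (s + 1) * (r + 1) = s * (r + 1) + r + 1 := by ring
      have h2 : (s + 1 - 1) * (r + 1) = s * (r + 1) := by rw [Nat.add_sub_cancel]
      rw [h1, h2]
      generalize s * (r + 1) = p
      omega
    rw [hidx, hkopt]
    have h3 : (s + 1) * r = s * r + r := by ring
    have h4 : (s + 1 - 1) * r = s * r := by rw [Nat.add_sub_cancel]
    rw [h3, h4]
    generalize s * r = p
    omega
end

section
/- For r ∈ {2,3} and every integer j with 0 ≤ j < 2^{r−1} − r + 1, every binary linear code of length (r+1)(2^{r−1}+1−j) with minimum Hamming distance at least 2(r+1) in which every coordinate has locality r has dimension at most r(2^{r−1} − r + 2 − j) − 1. -/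
open Finset

/-!
Shortening a code on the repair set `R` of a coordinate `i` outside the already shortened set
`V` costs at most `#(R \ V) ≤ r` dimensions and kills `#(R \ V) + 1` further coordinates, because
the repair equation then forces the coordinate `i` to vanish as well. Once few coordinates remain
alive, `n - #V < 2d`, and the Plotkin bound `2 ^ k * (2d - (n - #V)) ≤ 2d` caps the dimension `k`.
So a function `f` with `f v` bounding the dimension of any subcode vanishing on `v` coordinates is
certified by checking one of these two alternatives at every `v < n`; for
`(n, d) = (9, 6), (20, 8), (16, 8)` an explicit table does this and yields the claimed bound.
-/

section Vanishing

variable {F ι : Type*} [Field F]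

def vanishingOn (S : Finset ι) : Submodule F (ι → F) :=
  LinearMap.ker (LinearMap.funLeft F F ((↑) : S → ι))

theorem mem_vanishingOn {S : Finset ι} {c : ι → F} :
    c ∈ vanishingOn S ↔ ∀ j ∈ S, c j = 0 := by
  simp [vanishingOn, funext_iff, LinearMap.funLeft_apply]

theorem finrank_le_card_add_finrank_inf_vanishingOn [Finite ι]
    (D : Submodule F (ι → F)) (S : Finset ι) :
    Module.finrank F D ≤ #S + Module.finrank F ↥(D ⊓ vanishingOn S) := by
  set g := (LinearMap.funLeft F F ((↑) : S → ι)).domRestrict D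
  have hrange : Module.finrank F (LinearMap.range g) ≤ #S := by
    simpa using Submodule.finrank_le (LinearMap.range g)
  have hker : Module.finrank F (LinearMap.ker g) = Module.finrank F ↥(D ⊓ vanishingOn S) := by
    rw [LinearMap.ker_domRestrict, ← Submodule.map_comap_subtype]
    exact (Submodule.equivMapOfInjective _ D.injective_subtype _).finrank_eq
  have := LinearMap.finrank_range_add_finrank_ker g
  omega

end Vanishing

theorem AddMonoidHom.two_mul_card_ne_zero_le {G : Type*} [AddGroup G] [Fintype G]
    [DecidableEq G] (φ : G →+ ZMod 2) :
    2 * #{g | φ g ≠ 0} ≤ Fintype.card G := by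
  by_cases hφ : ∀ g, φ g = 0
  · simp [hφ]
  simp only [not_forall] at hφ
  obtain ⟨g₀, hg₀⟩ := hφ
  have hone : ∀ a : ZMod 2, a ≠ 0 → a = 1 := by decide
  -- translation by `g₀` swaps the two fibres of `φ`
  have hswap : #{g | φ g ≠ 0} ≤ #{g | ¬ φ g ≠ 0} := by
    refine card_le_card_of_injOn (· + g₀) (fun g hg => ?_) (add_left_injective g₀).injOn
    simp only [coe_filter, mem_univ, true_and, Set.mem_ofPred_eq] at hg ⊢
    rw [map_add, hone _ hg, hone _ hg₀]
    decide
  have := card_filter_add_card_filter_not (s := univ) (fun g => φ g ≠ 0)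
  rw [card_univ] at this
  omega

section Plotkin

variable {ι : Type*} [Fintype ι]

theorem two_mul_sum_hammingNorm_le [DecidableEq ι] (D : Submodule (ZMod 2) (ι → ZMod 2))
    [Fintype D] (V : Finset ι) (hV : D ≤ vanishingOn V) :
    2 * ∑ c : D, hammingNorm (c : ι → ZMod 2) ≤ (Fintype.card ι - #V) * Fintype.card D := by
  let φ : ι → D →+ ZMod 2 := fun j => (LinearMap.proj j ∘ₗ D.subtype).toAddMonoidHom
  have hcount : ∑ c : D, hammingNorm (c : ι → ZMod 2) = ∑ j, #{c : D | φ j c ≠ 0} := by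
    simp only [hammingNorm, card_filter]
    exact sum_comm
  have hzero : ∀ j ∈ V, #{c : D | φ j c ≠ 0} = 0 := fun j hj => by
    simp [φ, mem_vanishingOn.1 (hV _) j hj]
  calc 2 * ∑ c : D, hammingNorm (c : ι → ZMod 2)
      = ∑ j ∈ Vᶜ, 2 * #{c : D | φ j c ≠ 0} := by
        rw [hcount, mul_sum, ← sum_compl_add_sum V,
          sum_eq_zero (s := V) fun j hj => by rw [hzero j hj, mul_zero], add_zero]
    _ ≤ ∑ _j ∈ Vᶜ, Fintype.card D := sum_le_sum fun j _ => (φ j).two_mul_card_ne_zero_le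
    _ = (Fintype.card ι - #V) * Fintype.card D := by rw [sum_const, card_compl, smul_eq_mul]

theorem card_mul_le_add_sum_hammingNorm (D : Submodule (ZMod 2) (ι → ZMod 2)) [Fintype D]
    {d : ℕ} (hd : ∀ c ∈ D, c ≠ 0 → d ≤ hammingNorm c) :
    Fintype.card D * d ≤ d + ∑ c : D, hammingNorm (c : ι → ZMod 2) := by
  classical
  have hlow : #(univ.erase (0 : D)) * d ≤
      ∑ c ∈ univ.erase (0 : D), hammingNorm (c : ι → ZMod 2) :=
    card_nsmul_le_sum _ _ _ fun c hc => hd c c.2 (by simpa using ne_of_mem_erase hc)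
  rw [card_erase_of_mem (mem_univ _), card_univ] at hlow
  rw [← add_sum_erase _ _ (mem_univ 0)]
  have := Fintype.card_pos (α := D)
  rw [Submodule.coe_zero, hammingNorm_zero, zero_add]
  calc Fintype.card D * d = d + (Fintype.card D - 1) * d := by
        rw [Nat.sub_one_mul]; have := Nat.le_mul_of_pos_left d this; omega
    _ ≤ _ := by gcongr

theorem plotkin_bound (D : Submodule (ZMod 2) (ι → ZMod 2)) {d : ℕ}
    (hd : ∀ c ∈ D, c ≠ 0 → d ≤ hammingNorm c) (V : Finset ι) (hV : D ≤ vanishingOn V) :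
    2 ^ Module.finrank (ZMod 2) D * (2 * d + #V - Fintype.card ι) ≤ 2 * d := by
  classical
  set M := 2 ^ Module.finrank (ZMod 2) D
  have hM : Fintype.card D = M := by rw [Module.card_eq_pow_finrank (K := ZMod 2), ZMod.card]
  have hlow := card_mul_le_add_sum_hammingNorm D hd
  have hup := two_mul_sum_hammingNorm_le D V hV
  rw [hM] at hlow hup
  have hVcard : #V ≤ Fintype.card ι := card_le_univ V
  calc M * (2 * d + #V - Fintype.card ι) ≤ M * (2 * d - (Fintype.card ι - #V)) :=
        Nat.mul_le_mul_left _ (by omega)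
    _ = M * (2 * d) - (Fintype.card ι - #V) * M := by rw [Nat.mul_sub, mul_comm M (_ - _)]
    _ ≤ 2 * d := by
        rw [Nat.sub_le_iff_le_add]
        linarith

theorem finrank_le_of_plotkin (D : Submodule (ZMod 2) (ι → ZMod 2)) {d b : ℕ}
    (hd : ∀ c ∈ D, c ≠ 0 → d ≤ hammingNorm c) (V : Finset ι) (hV : D ≤ vanishingOn V)
    (hb : 2 * d < 2 ^ (b + 1) * (2 * d + #V - Fintype.card ι)) :
    Module.finrank (ZMod 2) D ≤ b := by
  by_contra! hk
  have : 2 ^ (b + 1) ≤ 2 ^ Module.finrank (ZMod 2) D := Nat.pow_le_pow_right two_pos hk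
  have := Nat.mul_le_mul_right (2 * d + #V - Fintype.card ι) this
  have := plotkin_bound D hd V hV
  omega

end Plotkin

theorem inf_vanishingOn_sdiff_le {F ι : Type*} [Field F] [DecidableEq ι]
    {D : Submodule F (ι → F)} {V R : Finset ι} {i : ι} {lam : ι → F}
    (hDV : D ≤ vanishingOn V) (hrep : ∀ c ∈ D, c i = ∑ j ∈ R, lam j * c j) :
    D ⊓ vanishingOn (R \ V) ≤ vanishingOn (insert i (V ∪ R)) := by
  rintro c ⟨hcD, hcRV⟩
  have hcV := mem_vanishingOn.1 (hDV hcD)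
  have hcR : ∀ j ∈ R, c j = 0 := fun j hj => by
    by_cases hjV : j ∈ V
    · exact hcV j hjV
    · exact mem_vanishingOn.1 hcRV j (mem_sdiff.2 ⟨hj, hjV⟩)
  refine mem_vanishingOn.2 fun j hj => ?_
  rcases mem_insert.1 hj with rfl | hj
  · rw [hrep c hcD]
    exact sum_eq_zero fun j hj => by rw [hcR j hj, mul_zero]
  · rcases mem_union.1 hj with hj | hj
    · exact hcV j hj
    · exact hcR j hj

theorem finrank_le_of_shortening_recursion {n d r : ℕ}
    (C : Submodule (ZMod 2) (Fin n → ZMod 2))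
    (hd : ∀ c ∈ C, c ≠ 0 → d ≤ hammingNorm c) (hloc : ∀ i, HasLocality (ZMod 2) C i r)
    (f : ℕ → ℕ)
    (hf : ∀ v < n,
      2 * d < 2 ^ (f v + 1) * (2 * d + v - n) ∨ ∀ s ≤ r, s + f (v + s + 1) ≤ f v)
    (V : Finset (Fin n)) (D : Submodule (ZMod 2) (Fin n → ZMod 2))
    (hDC : D ≤ C) (hDV : D ≤ vanishingOn V) :
    Module.finrank (ZMod 2) D ≤ f #V := by
  by_cases hV : ∀ i, i ∈ V
  · have hD : D = ⊥ := eq_bot_iff.2 fun c hc =>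
      funext fun j => mem_vanishingOn.1 (hDV hc) j (hV j)
    subst hD
    simp
  obtain ⟨i, hiV⟩ := not_forall.1 hV
  have hVn : #V < n := by simpa using card_lt_univ_of_notMem hiV
  rcases hf #V hVn with hplotkin | hstep
  · exact finrank_le_of_plotkin D (fun c hc => hd c (hDC hc)) V hDV (by simpa using hplotkin)
  obtain ⟨R, hiR, hRr, lam, hrep⟩ := hloc i
  have hcard : #(insert i (V ∪ R)) = #V + #(R \ V) + 1 := by
    rw [card_insert_of_notMem (by simp [hiV, hiR]), union_comm, ← card_sdiff_add_card,
      add_comm #V]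
  have hshorten := finrank_le_card_add_finrank_inf_vanishingOn D (R \ V)
  have hrec := finrank_le_of_shortening_recursion C hd hloc f hf (insert i (V ∪ R))
    (D ⊓ vanishingOn (R \ V)) (inf_le_left.trans hDC)
    (inf_vanishingOn_sdiff_le hDV fun c hc => hrep c (hDC hc))
  rw [hcard] at hrec
  have hcost := hstep #(R \ V) ((card_le_card sdiff_subset).trans hRr)
  omega
termination_by n - #V
decreasing_by
  rw [hcard]
  omega

theorem stmt17 (r j : ℕ) (hr : r = 2 ∨ r = 3) (hj : j < 2 ^ (r - 1) - r + 1)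
    (C : Submodule (ZMod 2) (Fin ((r + 1) * (2 ^ (r - 1) + 1 - j)) → ZMod 2))
    (hd : ∀ c ∈ C, c ≠ 0 → 2 * (r + 1) ≤ hammingNorm c)
    (hloc : ∀ i, HasLocality (ZMod 2) C i r) :
    Module.finrank (ZMod 2) C ≤ r * (2 ^ (r - 1) - r + 2 - j) - 1 := by
  have hbound := fun f hf => finrank_le_of_shortening_recursion C hd hloc f hf ∅ C le_rfl
    fun c _ => mem_vanishingOn.2 fun _ h => absurd h (notMem_empty _)
  rcases hr with rfl | rfl
  · obtain rfl : j = 0 := by norm_num at hj; exact hj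
    exact (hbound (fun _ => 2) (by decide)).trans (by norm_num)
  · obtain rfl | rfl : j = 0 ∨ j = 1 := by norm_num at hj; omega
    · exact (hbound (fun v => [8, 7, 6, 6, 5, 4, 3, 2, 2, 1, 1, 1, 1].getD v 0) (by decide)).trans
        (by norm_num)
    · exact (hbound (fun v => [5, 4, 3, 2, 2, 1, 1, 1, 1].getD v 0) (by decide)).trans
        (by norm_num)
end

section
/- There exists a binary linear code of length 19 and dimension 7 with minimum Hamming distance 8 whose coordinates admit a partition into a set of 3 coordinates each having locality 2 and a set of 16 coordinates each having locality 3. -/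
open Finset

/-- Generator matrix of a binary `[19,7,8]` code built from `RM(1,4)` plus two bent-function
cosets and three overall-parity tail coordinates. -/
def Mg : Matrix (Fin 7) (Fin 19) (ZMod 2) :=
  !![1,1,1,1,1,1,1,1,1,1,1,1,1,1,1,1,0,0,0;
     0,1,0,1,0,1,0,1,0,1,0,1,0,1,0,1,0,0,0;
     0,0,1,1,0,0,1,1,0,0,1,1,0,0,1,1,0,0,0;
     0,0,0,0,1,1,1,1,0,0,0,0,1,1,1,1,0,0,0;
     0,0,0,0,0,0,0,0,1,1,1,1,1,1,1,1,0,0,0;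
     1,0,1,0,1,1,0,0,0,1,1,0,1,1,1,1,1,1,0;
     1,0,0,0,0,0,1,0,0,1,0,0,1,1,1,0,1,0,1]

/-- The code: image of the message space under the generator matrix. -/
def Ccode : Submodule (ZMod 2) (Fin 19 → ZMod 2) :=
  LinearMap.range Mg.transpose.mulVecLin

lemma locHelper (i : Fin 19) (r : ℕ) (R : Finset (Fin 19)) (h1 : i ∉ R) (h2 : R.card ≤ r)
    (h3 : ∀ m : Fin 7 → ZMod 2, (Mg.transpose.mulVec m) i = ∑ j ∈ R, (Mg.transpose.mulVec m) j) :
    HasLocality (ZMod 2) Ccode i r := by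
  refine ⟨R, h1, h2, fun _ => 1, ?_⟩
  rintro c ⟨m, rfl⟩
  simp only [Matrix.mulVecLin_apply, one_mul]
  exact h3 m

set_option maxRecDepth 100000 in
set_option maxHeartbeats 2000000 in
theorem stmt19 :
    ∃ C : Submodule (ZMod 2) (Fin 19 → ZMod 2),
      IsLinearCode (ZMod 2) C 7 8 ∧
      ∃ A B : Finset (Fin 19), Disjoint A B ∧ A ∪ B = Finset.univ ∧
        A.card = 3 ∧ B.card = 16 ∧
        (∀ x ∈ A, HasLocality (ZMod 2) C x 2) ∧
        (∀ x ∈ B, HasLocality (ZMod 2) C x 3) := by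
  refine ⟨Ccode, ⟨?_, ?_, ?_⟩, ({16,17,18} : Finset (Fin 19)),
      (Finset.univ \ {16,17,18} : Finset (Fin 19)), by decide, by decide, by decide, by decide,
      ?_, ?_⟩
  · -- dimension
    have hker : ∀ m : Fin 7 → ZMod 2, Mg.transpose.mulVec m = 0 → m = 0 := by decide
    have hinj : Function.Injective Mg.transpose.mulVecLin := by
      rw [injective_iff_map_eq_zero]
      intro m hm
      exact hker m (by rw [← Matrix.mulVecLin_apply]; exact hm)
    rw [Ccode, LinearMap.finrank_range_of_inj hinj, Module.finrank_fin_fun]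
  · -- minimum distance lower bound
    have hmin : ∀ m : Fin 7 → ZMod 2, m ≠ 0 → 8 ≤ hammingNorm (Mg.transpose.mulVec m) := by
      decide
    rintro c ⟨m, rfl⟩ hne
    have hm : m ≠ 0 := by
      rintro rfl
      exact hne (map_zero _)
    simp only [Matrix.mulVecLin_apply]
    exact hmin m hm
  · -- a codeword of weight exactly 8
    exact ⟨Mg.transpose.mulVec ![0,1,0,0,0,0,0],
      ⟨![0,1,0,0,0,0,0], Matrix.mulVecLin_apply _ _⟩, by decide, by decide⟩
  · -- locality 2 for the three tail coordinates
    intro x hx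
    fin_cases hx
    · exact locHelper 16 2 {17,18} (by decide) (by decide) (by decide)
    · exact locHelper 17 2 {16,18} (by decide) (by decide) (by decide)
    · exact locHelper 18 2 {16,17} (by decide) (by decide) (by decide)
  · -- locality 3 for the sixteen Reed–Muller coordinates
    intro x hx
    fin_cases hx
    · exact locHelper 0 3 {1,8,9} (by decide) (by decide) (by decide)
    · exact locHelper 1 3 {0,8,9} (by decide) (by decide) (by decide)
    · exact locHelper 2 3 {0,13,15} (by decide) (by decide) (by decide)
    · exact locHelper 3 3 {0,5,6} (by decide) (by decide) (by decide)
    · exact locHelper 4 3 {0,10,14} (by decide) (by decide) (by decide)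
    · exact locHelper 5 3 {0,3,6} (by decide) (by decide) (by decide)
    · exact locHelper 6 3 {0,3,5} (by decide) (by decide) (by decide)
    · exact locHelper 7 3 {0,11,12} (by decide) (by decide) (by decide)
    · exact locHelper 8 3 {0,1,9} (by decide) (by decide) (by decide)
    · exact locHelper 9 3 {0,1,8} (by decide) (by decide) (by decide)
    · exact locHelper 10 3 {0,4,14} (by decide) (by decide) (by decide)
    · exact locHelper 11 3 {0,7,12} (by decide) (by decide) (by decide)
    · exact locHelper 12 3 {0,7,11} (by decide) (by decide) (by decide)
    · exact locHelper 13 3 {0,2,15} (by decide) (by decide) (by decide)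
    · exact locHelper 14 3 {0,4,10} (by decide) (by decide) (by decide)
    · exact locHelper 15 3 {0,2,13} (by decide) (by decide) (by decide)
end
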